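/- Let X and Y be Banach spaces, F : X → Y Fréchet differentiable, ā ∈ X, A† : X → Y and A : Y → X bounded linear operators, and r > 0 and Y₀, Z₀, Z₁, Z₂ ≥ 0 constants satisfying ‖A F(ā)‖_X ≤ Y₀, ‖Id_X − A∘A†‖ ≤ Z₀, ‖A∘(A† − DF(ā))‖ ≤ Z₁, ‖A∘(DF(x) − DF(ā))‖ ≤ Z₂‖x − ā‖_X for all x in the closed ball of radius r centered at ā, and Y₀ + (Z₀ + Z₁) r + Z₂ r² < r. Then the map T(x) = x − A(F(x)) sends the closed ball of radius r centered at ā into the open ball of radius r centered at ā; more precisely, ‖T(x) − ā‖_X ≤ Y₀ + (Z₀ + Z₁) r + Z₂ r² < r for every x with ‖x − ā‖_X ≤ r. -/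

import Mathlib

/-!
The derivative of `T x = x - A (F x)` is `id - A ∘ DF x`, which splits as
`(id - A ∘ A†) + A ∘ (A† - DF ā) - A ∘ (DF x - DF ā)`; on the closed ball of radius `r` its norm
is therefore at most `Z₀ + Z₁ + Z₂ r`. By the mean value inequality `T` is Lipschitz with this
constant on the ball, and `T x - ā = (T x - T ā) - A (F ā)` gives
`‖T x - ā‖ ≤ Y₀ + (Z₀ + Z₁ + Z₂ r) r`, which is `< r` by the radii-polynomial condition.
-/

open Metric

section NewtonMap

variable {𝕜 X Y : Type*} [NontriviallyNormedField 𝕜]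
  [NormedAddCommGroup X] [NormedSpace 𝕜 X] [NormedAddCommGroup Y] [NormedSpace 𝕜 Y]

def newtonMap (A : Y →L[𝕜] X) (F : X → Y) (x : X) : X :=
  x - A (F x)

theorem ContinuousLinearMap.norm_id_sub_comp_le (A : Y →L[𝕜] X) (B D D₀ : X →L[𝕜] Y) :
    ‖ContinuousLinearMap.id 𝕜 X - A.comp D‖ ≤
      ‖ContinuousLinearMap.id 𝕜 X - A.comp B‖ + ‖A.comp (B - D₀)‖ + ‖A.comp (D - D₀)‖ := by
  have hsplit : ContinuousLinearMap.id 𝕜 X - A.comp D =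
      (ContinuousLinearMap.id 𝕜 X - A.comp B) + A.comp (B - D₀) - A.comp (D - D₀) := by
    rw [comp_sub, comp_sub]
    abel
  rw [hsplit]
  exact (norm_sub_le _ _).trans (by gcongr; exact norm_add_le _ _)

theorem hasFDerivAt_newtonMap {F : X → Y} {F' : X →L[𝕜] Y} {x : X} (A : Y →L[𝕜] X)
    (hF : HasFDerivAt F F' x) :
    HasFDerivAt (newtonMap A F) (ContinuousLinearMap.id 𝕜 X - A.comp F') x :=
  (hasFDerivAt_id x).sub (A.hasFDerivAt.comp x hF)

section Real

variable [NormedSpace ℝ X] [NormedSpace ℝ Y]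

theorem norm_newtonMap_sub_le_of_mem_closedBall {F : X → Y} {DF : X → X →L[ℝ] Y}
    (hF : ∀ x, HasFDerivAt F (DF x) x) (A : Y →L[ℝ] X) {a : X} {r C : ℝ}
    (hC : ∀ x ∈ closedBall a r, ‖ContinuousLinearMap.id ℝ X - A.comp (DF x)‖ ≤ C)
    {x : X} (hx : x ∈ closedBall a r) :
    ‖newtonMap A F x - a‖ ≤ ‖A (F a)‖ + C * r := by
  have ha : a ∈ closedBall a r := mem_closedBall_self (nonneg_of_mem_closedBall hx)
  have hC₀ : 0 ≤ C := (norm_nonneg _).trans (hC a ha)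
  have hLip : ‖newtonMap A F x - newtonMap A F a‖ ≤ C * ‖x - a‖ :=
    (convex_closedBall a r).norm_image_sub_le_of_norm_hasFDerivWithin_le
      (fun z _ ↦ (hasFDerivAt_newtonMap A (hF z)).hasFDerivWithinAt) hC ha hx
  have hxa : ‖x - a‖ ≤ r := mem_closedBall_iff_norm.mp hx
  calc ‖newtonMap A F x - a‖ = ‖(newtonMap A F x - newtonMap A F a) - A (F a)‖ := by
        congr 1
        simp only [newtonMap]
        abel
    _ ≤ C * ‖x - a‖ + ‖A (F a)‖ := (norm_sub_le _ _).trans (by gcongr)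
    _ ≤ ‖A (F a)‖ + C * r := by linarith [mul_le_mul_of_nonneg_left hxa hC₀]

end Real

end NewtonMap

theorem newton_map_maps_closedBall_into_ball_general
    {X Y : Type*} [NormedAddCommGroup X] [NormedSpace ℝ X]
    [NormedAddCommGroup Y] [NormedSpace ℝ Y]
    (F : X → Y) (DF : X → X →L[ℝ] Y) (hF : ∀ x, HasFDerivAt F (DF x) x)
    (abar : X) (Adag : X →L[ℝ] Y) (A : Y →L[ℝ] X)
    (r Y₀ Z₀ Z₁ Z₂ : ℝ)
    (hZ₂ : 0 ≤ Z₂)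
    (hY : ‖A (F abar)‖ ≤ Y₀)
    (hZ0 : ‖ContinuousLinearMap.id ℝ X - A.comp Adag‖ ≤ Z₀)
    (hZ1 : ‖A.comp (Adag - DF abar)‖ ≤ Z₁)
    (hZ2 : ∀ x ∈ Metric.closedBall abar r, ‖A.comp (DF x - DF abar)‖ ≤ Z₂ * ‖x - abar‖)
    (hp : Y₀ + (Z₀ + Z₁) * r + Z₂ * r ^ 2 < r) :
    ∀ x ∈ Metric.closedBall abar r,
      ‖(x - A (F x)) - abar‖ ≤ Y₀ + (Z₀ + Z₁) * r + Z₂ * r ^ 2 ∧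
        (x - A (F x)) ∈ Metric.ball abar r := by
  have hderiv : ∀ z ∈ closedBall abar r,
      ‖ContinuousLinearMap.id ℝ X - A.comp (DF z)‖ ≤ Z₀ + Z₁ + Z₂ * r := by
    intro z hz
    have hZ2r : Z₂ * ‖z - abar‖ ≤ Z₂ * r :=
      mul_le_mul_of_nonneg_left (mem_closedBall_iff_norm.mp hz) hZ₂
    linarith [A.norm_id_sub_comp_le Adag (DF z) (DF abar), hZ2 z hz]
  intro x hx
  have hbound : ‖(x - A (F x)) - abar‖ ≤ Y₀ + (Z₀ + Z₁) * r + Z₂ * r ^ 2 := by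
    calc ‖(x - A (F x)) - abar‖ ≤ ‖A (F abar)‖ + (Z₀ + Z₁ + Z₂ * r) * r :=
          norm_newtonMap_sub_le_of_mem_closedBall hF A hderiv hx
      _ ≤ Y₀ + (Z₀ + Z₁) * r + Z₂ * r ^ 2 := by linarith
  exact ⟨hbound, mem_ball_iff_norm.mpr (hbound.trans_lt hp)⟩

/-- Under the `Y₀, Z₀, Z₁, Z₂` bounds and the radii-polynomial condition,
the Newton-like map `T(x) = x − A(F(x))` sends the closed ball of radius `r` about `ā`
into the open ball of radius `r` about `ā`; more precisely,
`‖T(x) − ā‖ ≤ Y₀ + (Z₀ + Z₁) r + Z₂ r² < r` on the closed ball. -/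
theorem newton_map_maps_closedBall_into_ball
    {X Y : Type*} [NormedAddCommGroup X] [NormedSpace ℝ X] [CompleteSpace X]
    [NormedAddCommGroup Y] [NormedSpace ℝ Y] [CompleteSpace Y]
    (F : X → Y) (DF : X → X →L[ℝ] Y) (hF : ∀ x, HasFDerivAt F (DF x) x)
    (abar : X) (Adag : X →L[ℝ] Y) (A : Y →L[ℝ] X)
    (r Y₀ Z₀ Z₁ Z₂ : ℝ) (hr : 0 < r)
    (hY₀ : 0 ≤ Y₀) (hZ₀ : 0 ≤ Z₀) (hZ₁ : 0 ≤ Z₁) (hZ₂ : 0 ≤ Z₂)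
    (hY : ‖A (F abar)‖ ≤ Y₀)
    (hZ0 : ‖ContinuousLinearMap.id ℝ X - A.comp Adag‖ ≤ Z₀)
    (hZ1 : ‖A.comp (Adag - DF abar)‖ ≤ Z₁)
    (hZ2 : ∀ x ∈ Metric.closedBall abar r, ‖A.comp (DF x - DF abar)‖ ≤ Z₂ * ‖x - abar‖)
    (hp : Y₀ + (Z₀ + Z₁) * r + Z₂ * r ^ 2 < r) :
    ∀ x ∈ Metric.closedBall abar r,
      ‖(x - A (F x)) - abar‖ ≤ Y₀ + (Z₀ + Z₁) * r + Z₂ * r ^ 2 ∧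
        (x - A (F x)) ∈ Metric.ball abar r :=
  newton_map_maps_closedBall_into_ball_general F DF hF abar Adag A r Y₀ Z₀ Z₁ Z₂ hZ₂ hY hZ0 hZ1 hZ2
    hp
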